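/- For a finite-dimensional vector space V over a field k of characteristic zero with a bivector π ∈ ∧²V, the Moyal star product f *_h g := m ∘ e^{(h/2)π}(f ⊗ g) on k[V][h] is associative, where π acts as the second-order constant-coefficient bidifferential operator determined by π ∈ V ⊗ V and m is the commutative multiplication. -/

import Mathlib

open MvPolynomial

noncomputable section

set_option linter.unusedSectionVars false
set_option maxHeartbeats 1000000

variable {k : Type*} [Field k] [CharZero k]
variable {σ : Type*} [Fintype σ] [DecidableEq σ]

/-- `f ⊗ g` as a polynomial in a doubled set of variables. -/
def tens (f g : MvPolynomial σ (Polynomial k)) :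
    MvPolynomial (σ ⊕ σ) (Polynomial k) :=
  rename Sum.inl f * rename Sum.inr g

/-- The bivector `π ∈ ∧²V ⊆ V ⊗ V` acting as a second-order constant-coefficient
bidifferential operator on `k[V] ⊗ k[V]`. -/
def piOp (π : σ → σ → k) (p : MvPolynomial (σ ⊕ σ) (Polynomial k)) :
    MvPolynomial (σ ⊕ σ) (Polynomial k) :=
  ∑ i : σ, ∑ j : σ,
    Polynomial.C (π i j) • pderiv (Sum.inl i) (pderiv (Sum.inr j) p)

/-- The commutative multiplication `m : k[V] ⊗ k[V] → k[V]`. -/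
def joinMul : MvPolynomial (σ ⊕ σ) (Polynomial k) →ₐ[Polynomial k] MvPolynomial σ (Polynomial k) :=
  aeval (Sum.elim X X)

/-- The Moyal star product `f *ₕ g = m ∘ e^{(h/2)π} (f ⊗ g)`; the exponential series
is finite on each pair of arguments (all terms of order `> deg f + deg g` vanish). -/
def moyal (π : σ → σ → k) (f g : MvPolynomial σ (Polynomial k)) :
    MvPolynomial σ (Polynomial k) :=
  ∑ d ∈ Finset.range (f.totalDegree + g.totalDegree + 1),
    (Polynomial.C ((2 ^ d * d.factorial : k)⁻¹) * Polynomial.X ^ d) •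
      joinMul ((piOp π)^[d] (tens f g))

/-- The inclusion `k[V] → k[V][h]`. -/
def liftC : MvPolynomial σ k →+* MvPolynomial σ (Polynomial k) :=
  MvPolynomial.map (Polynomial.C : k →+* Polynomial k)

namespace MoyalAux

section Ops

variable {τ : Type*} [DecidableEq τ]

/-- partial derivative as an endomorphism -/
def pd (x : τ) : Module.End (Polynomial k) (MvPolynomial τ (Polynomial k)) :=
  (pderiv x).toLinearMap

@[simp] lemma pd_apply (x : τ) (p : MvPolynomial τ (Polynomial k)) :
    pd x p = pderiv x p := rfl

lemma pd_comm (x y : τ) : Commute (pd (k := k) (τ := τ) x) (pd y) := by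
  apply LinearMap.ext
  intro p
  show pderiv x (pderiv y p) = pderiv y (pderiv x p)
  induction p using MvPolynomial.induction_on' with
  | monomial m a =>
    simp only [pderiv_monomial]
    rcases eq_or_ne x y with rfl | hxy
    · rfl
    · rw [tsub_right_comm]
      congr 1
      rw [Finsupp.tsub_apply, Finsupp.tsub_apply, Finsupp.single_eq_of_ne hxy,
        Finsupp.single_eq_of_ne (Ne.symm hxy), tsub_zero, tsub_zero]
      ring
  | add p q hp hq => simp [hp, hq]

/-- the second order operator attached to `π` and a pair of "slot" embeddings -/
def Pop (π : σ → σ → k) (a b : σ → τ) :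
    Module.End (Polynomial k) (MvPolynomial τ (Polynomial k)) :=
  ∑ i : σ, ∑ j : σ, Polynomial.C (π i j) • (pd (a i) * pd (b j))

lemma Pop_apply (π : σ → σ → k) (a b : σ → τ) (p : MvPolynomial τ (Polynomial k)) :
    Pop π a b p = ∑ i : σ, ∑ j : σ,
      Polynomial.C (π i j) • pderiv (a i) (pderiv (b j) p) := by
  simp [Pop, LinearMap.sum_apply, Module.End.mul_apply]

lemma Pop_comm (π π' : σ → σ → k) (a b c d : σ → τ) :
    Commute (Pop (k := k) π a b) (Pop π' c d) := by
  unfold Pop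
  apply Commute.sum_left; intro i _
  apply Commute.sum_left; intro j _
  apply Commute.sum_right; intro i' _
  apply Commute.sum_right; intro j' _
  apply Commute.smul_left
  apply Commute.smul_right
  exact ((pd_comm (a i) (c i')).mul_right (pd_comm (a i) (d j'))).mul_left
    ((pd_comm (b j) (c i')).mul_right (pd_comm (b j) (d j')))

/-! ### weight filtration -/

/-- weight of a monomial -/
def wt (w : τ → ℕ) (m : τ →₀ ℕ) : ℕ := m.sum fun v e => e * w v

lemma wt_add (w : τ → ℕ) (m m' : τ →₀ ℕ) : wt w (m + m') = wt w m + wt w m' :=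
  Finsupp.sum_add_index' (fun _ => zero_mul _) (fun _ _ _ => add_mul _ _ _)

lemma wt_single (w : τ → ℕ) (x : τ) (e : ℕ) : wt w (Finsupp.single x e) = e * w x :=
  Finsupp.sum_single_index (zero_mul _)

/-- submodule of polynomials all whose monomials have `w`-weight at most `n` -/
def Mle (w : τ → ℕ) (n : ℕ) : Submodule (Polynomial k) (MvPolynomial τ (Polynomial k)) where
  carrier := {p | ∀ m ∈ p.support, wt w m ≤ n}
  add_mem' := by
    intro p q hp hq m hm
    rcases Finset.mem_union.1 (MvPolynomial.support_add hm) with h | h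
    exacts [hp m h, hq m h]
  zero_mem' := by simp
  smul_mem' := by
    intro r p hp m hm
    exact hp m (MvPolynomial.support_smul hm)

lemma Mle_mono (w : τ → ℕ) {n n' : ℕ} (h : n ≤ n') :
    Mle (k := k) w n ≤ Mle w n' := fun _ hp m hm => (hp m hm).trans h

lemma mul_mem_Mle {w : τ → ℕ} {n n' : ℕ} {p q : MvPolynomial τ (Polynomial k)}
    (hp : p ∈ Mle w n) (hq : q ∈ Mle w n') : p * q ∈ Mle w (n + n') := by
  intro m hm
  have := MvPolynomial.support_mul p q hm
  rcases Finset.mem_add.1 this with ⟨m1, h1, m2, h2, rfl⟩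
  rw [wt_add]
  exact add_le_add (hp m1 h1) (hq m2 h2)

lemma exists_of_mem_support_pderiv {x : τ} {p : MvPolynomial τ (Polynomial k)}
    {m' : τ →₀ ℕ} (hm' : m' ∈ (pderiv x p).support) :
    ∃ m ∈ p.support, m x ≠ 0 ∧ m' = m - Finsupp.single x 1 := by
  have hrw : pderiv x p
      = ∑ m ∈ p.support, monomial (m - Finsupp.single x 1) (p.coeff m * (m x)) := by
    conv_lhs => rw [p.as_sum]
    rw [map_sum]
    simp [pderiv_monomial]
  rw [hrw] at hm'
  have hne := MvPolynomial.mem_support_iff.1 hm'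
  rw [MvPolynomial.coeff_sum] at hne
  obtain ⟨m, hm, hc⟩ := Finset.exists_ne_zero_of_sum_ne_zero hne
  rw [MvPolynomial.coeff_monomial] at hc
  split_ifs at hc with he
  · refine ⟨m, hm, ?_, he.symm⟩
    intro h0
    rw [h0] at hc
    simp at hc
  · exact absurd rfl hc

lemma pderiv_mem_Mle {w : τ → ℕ} {n : ℕ} {x : τ} {p : MvPolynomial τ (Polynomial k)}
    (hp : p ∈ Mle w n) : pderiv x p ∈ Mle w (n - w x) := by
  intro m' hm'
  obtain ⟨m, hm, hx, rfl⟩ := exists_of_mem_support_pderiv hm'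
  have hle : Finsupp.single x 1 ≤ m := by
    rw [Finsupp.single_le_iff]
    omega
  have heq : wt w (m - Finsupp.single x 1) + w x = wt w m := by
    conv_lhs => rw [← one_mul (w x), ← wt_single w x 1]
    rw [← wt_add, tsub_add_cancel_of_le hle]
  have hn := hp m hm
  omega

lemma pderiv_eq_zero_of_Mle {w : τ → ℕ} {n : ℕ} {x : τ} {p : MvPolynomial τ (Polynomial k)}
    (hp : p ∈ Mle w n) (h : n < w x) : pderiv x p = 0 := by
  rw [← MvPolynomial.support_eq_empty, Finset.eq_empty_iff_forall_notMem]
  intro m' hm'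
  obtain ⟨m, hm, hx, rfl⟩ := exists_of_mem_support_pderiv hm'
  have hn := hp m hm
  have : w x ≤ wt w m := by
    calc w x = 1 * w x := (one_mul _).symm
    _ ≤ m x * w x := Nat.mul_le_mul_right _ (by omega)
    _ ≤ wt w m := by
      rw [wt, Finsupp.sum]
      refine Finset.single_le_sum (f := fun v => m v * w v) (fun _ _ => Nat.zero_le _) ?_
      rwa [Finsupp.mem_support_iff]
  omega

lemma rename_mem_Mle {υ : Type*} [DecidableEq υ] {w : υ → ℕ} {W : ℕ} {c : τ → υ}
    (hc : Function.Injective c) (hw : ∀ v, w (c v) ≤ W) (p : MvPolynomial τ (Polynomial k)) :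
    rename c p ∈ Mle w (p.totalDegree * W) := by
  intro m' hm'
  rw [MvPolynomial.support_rename_of_injective hc] at hm'
  obtain ⟨m, hm, rfl⟩ := Finset.mem_image.1 hm'
  have h1 : wt w (Finsupp.mapDomain c m) = m.sum fun v e => e * w (c v) := by
    rw [wt]
    exact Finsupp.sum_mapDomain_index (fun _ => zero_mul _) (fun _ _ _ => add_mul _ _ _)
  rw [h1]
  calc (m.sum fun v e => e * w (c v)) ≤ m.sum fun _ e => e * W := by
        rw [Finsupp.sum, Finsupp.sum]
        exact Finset.sum_le_sum fun v _ => Nat.mul_le_mul_left _ (hw v)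
    _ = (m.sum fun _ e => e) * W := by rw [Finsupp.sum, Finsupp.sum, Finset.sum_mul]
    _ ≤ p.totalDegree * W := Nat.mul_le_mul_right _ (MvPolynomial.le_totalDegree hm)

/-! ### `Pop` and the filtration -/

lemma Pop_mem_Mle {w : τ → ℕ} {n : ℕ} (π : σ → σ → k) (a b : σ → τ)
    {p : MvPolynomial τ (Polynomial k)} (hp : p ∈ Mle w n) : Pop π a b p ∈ Mle w n := by
  rw [Pop_apply]
  apply Submodule.sum_mem; intro i _
  apply Submodule.sum_mem; intro j _
  apply Submodule.smul_mem
  have h1 := pderiv_mem_Mle (x := b j) hp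
  have h2 := pderiv_mem_Mle (x := a i) h1
  exact Mle_mono w (by omega) h2

lemma Pop_mem_Mle_sub {w : τ → ℕ} {n : ℕ} (π : σ → σ → k) {a b : σ → τ}
    (hab : ∀ i j, 1 ≤ w (a i) + w (b j))
    {p : MvPolynomial τ (Polynomial k)} (hp : p ∈ Mle w n) : Pop π a b p ∈ Mle w (n - 1) := by
  rw [Pop_apply]
  apply Submodule.sum_mem; intro i _
  apply Submodule.sum_mem; intro j _
  apply Submodule.smul_mem
  have h1 := pderiv_mem_Mle (x := b j) hp
  have h2 := pderiv_mem_Mle (x := a i) h1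
  refine Mle_mono w ?_ h2
  have := hab i j
  omega

lemma Pop_eq_zero_of_Mle {w : τ → ℕ} (π : σ → σ → k) {a b : σ → τ}
    (hab : ∀ i j, 1 ≤ w (a i) + w (b j))
    {p : MvPolynomial τ (Polynomial k)} (hp : p ∈ Mle w 0) : Pop π a b p = 0 := by
  rw [Pop_apply]
  apply Finset.sum_eq_zero; intro i _
  apply Finset.sum_eq_zero; intro j _
  rcases Nat.lt_or_ge 0 (w (b j)) with hb | hb
  · rw [pderiv_eq_zero_of_Mle hp hb, map_zero, smul_zero]
  · have h1 : pderiv (b j) p ∈ Mle w 0 := by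
      have := pderiv_mem_Mle (x := b j) hp
      simpa using this
    have ha : 0 < w (a i) := by have := hab i j; omega
    rw [pderiv_eq_zero_of_Mle h1 ha, smul_zero]

lemma Pop_pow_mem_Mle {w : τ → ℕ} {n : ℕ} (π : σ → σ → k) (a b : σ → τ)
    {p : MvPolynomial τ (Polynomial k)} (hp : p ∈ Mle w n) (m : ℕ) :
    ((Pop π a b) ^ m) p ∈ Mle w n := by
  induction m with
  | zero => simpa using hp
  | succ m ih =>
    rw [pow_succ', Module.End.mul_apply]
    exact Pop_mem_Mle π a b ih

lemma Pop_pow_mem_Mle_sub {w : τ → ℕ} {n : ℕ} (π : σ → σ → k) {a b : σ → τ}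
    (hab : ∀ i j, 1 ≤ w (a i) + w (b j))
    {p : MvPolynomial τ (Polynomial k)} (hp : p ∈ Mle w n) (m : ℕ) :
    ((Pop π a b) ^ m) p ∈ Mle w (n - m) := by
  induction m generalizing n p with
  | zero => simpa using hp
  | succ m ih =>
    rw [pow_succ, Module.End.mul_apply]
    have := ih (Pop_mem_Mle_sub π hab hp)
    refine Mle_mono w ?_ this
    omega

lemma Pop_pow_eq_zero {w : τ → ℕ} {n : ℕ} (π : σ → σ → k) {a b : σ → τ}
    (hab : ∀ i j, 1 ≤ w (a i) + w (b j))
    {p : MvPolynomial τ (Polynomial k)} (hp : p ∈ Mle w n) {m : ℕ} (h : n < m) :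
    ((Pop π a b) ^ m) p = 0 := by
  induction m generalizing n p with
  | zero => omega
  | succ m ih =>
    rw [pow_succ, Module.End.mul_apply]
    rcases Nat.eq_zero_or_pos n with rfl | hn
    · rw [Pop_eq_zero_of_Mle π hab hp, map_zero]
    · exact ih (Pop_mem_Mle_sub π hab hp) (by omega)

/-! ### chain rule for collapsing renames -/

lemma pderiv_rename_collapse {υ : Type*} [DecidableEq υ] [Fintype τ]
    (c : τ → υ) (u : υ) (p : MvPolynomial τ (Polynomial k)) :
    pderiv u (rename c p)
      = ∑ v ∈ Finset.univ.filter (fun v => c v = u), rename c (pderiv v p) := by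
  induction p using MvPolynomial.induction_on with
  | C a => simp [pderiv_C, rename_C]
  | add p q hp hq => simp only [map_add, hp, hq, ← Finset.sum_add_distrib]
  | mul_X p v ih =>
    have hsum : ∑ v' ∈ Finset.univ.filter (fun v' => c v' = u),
        rename c p * rename c (pderiv v' (X v))
        = if c v = u then rename c p else 0 := by
      rcases eq_or_ne (c v) u with h | h
      · rw [if_pos h]
        rw [Finset.sum_eq_single v]
        · simp
        · intro v' _ hne
          rw [pderiv_X_of_ne (Ne.symm hne)]
          simp
        · intro hv
          exact absurd (Finset.mem_filter.2 ⟨Finset.mem_univ v, h⟩) hv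
      · rw [if_neg h]
        apply Finset.sum_eq_zero
        intro v' hv'
        have hne : v ≠ v' := by
          rintro rfl
          exact h (Finset.mem_filter.1 hv').2
        rw [pderiv_X_of_ne hne]
        simp
    rw [map_mul, rename_X, pderiv_mul, ih, Finset.sum_mul]
    have hthis : ∑ v' ∈ Finset.univ.filter (fun v' => c v' = u), rename c (pderiv v' (p * X v))
        = (∑ v' ∈ Finset.univ.filter (fun v' => c v' = u), rename c (pderiv v' p) * X (c v))
          + if c v = u then rename c p else 0 := by
      rw [← hsum, ← Finset.sum_add_distrib]
      apply Finset.sum_congr rfl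
      intro v' _
      simp only [pderiv_mul, map_add, map_mul, rename_X]
    rw [hthis]
    congr 1
    rcases eq_or_ne (c v) u with h | h
    · simp [h]
    · simp [pderiv_X_of_ne h, h]

/-- triangle-to-square summation -/
lemma tri_sum {M : Type*} [AddCommMonoid M] (N : ℕ) (H : ℕ × ℕ → M)
    (h0 : ∀ j m, j < N → m < N → N ≤ j + m → H (j, m) = 0) :
    ∑ d ∈ Finset.range N, ∑ j ∈ Finset.range (d + 1), H (j, d - j)
      = ∑ p ∈ Finset.range N ×ˢ Finset.range N, H p := by
  rw [Finset.sum_congr rfl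
    (fun d _ => (Finset.Nat.sum_antidiagonal_eq_sum_range_succ_mk H d).symm)]
  rw [← Finset.sum_biUnion]
  · apply Finset.sum_subset
    · intro p hp
      rw [Finset.mem_biUnion] at hp
      obtain ⟨d, hd, hp⟩ := hp
      rw [Finset.HasAntidiagonal.mem_antidiagonal] at hp
      rw [Finset.mem_range] at hd
      rw [Finset.mem_product, Finset.mem_range, Finset.mem_range]
      omega
    · intro p hp hnp
      rw [Finset.mem_product, Finset.mem_range, Finset.mem_range] at hp
      rcases p with ⟨j, m⟩
      apply h0 _ _ hp.1 hp.2
      by_contra hlt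
      exact hnp (Finset.mem_biUnion.2 ⟨j + m, Finset.mem_range.2 (by omega),
        Finset.HasAntidiagonal.mem_antidiagonal.2 rfl⟩)
  · intro d _ d' _ hdd'
    apply Finset.disjoint_left.2
    intro p hp hp'
    rw [Finset.HasAntidiagonal.mem_antidiagonal] at hp hp'
    exact hdd' (hp ▸ hp')

end Ops

section Triple

variable (σ) [DecidableEq σ]

def s1 : σ → (σ ⊕ σ) ⊕ σ := fun i => Sum.inl (Sum.inl i)
def s2 : σ → (σ ⊕ σ) ⊕ σ := fun i => Sum.inl (Sum.inr i)
def s3 : σ → (σ ⊕ σ) ⊕ σ := Sum.inr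
def e23 : σ ⊕ σ → (σ ⊕ σ) ⊕ σ := Sum.elim (fun i => Sum.inl (Sum.inr i)) Sum.inr
def c12 : (σ ⊕ σ) ⊕ σ → σ ⊕ σ := Sum.elim (fun v => Sum.inl (Sum.elim id id v)) Sum.inr
def c23 : (σ ⊕ σ) ⊕ σ → σ ⊕ σ := Sum.elim id Sum.inr
def cAll : (σ ⊕ σ) ⊕ σ → σ := Sum.elim (Sum.elim id id) id

lemma s1_inj : Function.Injective (s1 σ) := fun a b h => by
  simpa [s1] using h
lemma s2_inj : Function.Injective (s2 σ) := fun a b h => by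
  simpa [s2] using h
lemma s3_inj : Function.Injective (s3 σ) := fun a b h => by
  simpa [s3] using h
lemma e23_inj : Function.Injective (e23 σ) := fun a b h => by
  rcases a with a | a <;> rcases b with b | b <;> simpa [e23] using h

lemma filt_c12_inl (i : σ) :
    Finset.univ.filter (fun v => c12 σ v = Sum.inl i) = {s1 σ i, s2 σ i} := by
  ext v
  rcases v with (a | a) | a <;>
    simp [c12, s1, s2, s3, Sum.inl.injEq, eq_comm]
lemma filt_c12_inr (j : σ) :
    Finset.univ.filter (fun v => c12 σ v = Sum.inr j) = {s3 σ j} := by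
  ext v
  rcases v with (a | a) | a <;>
    simp [c12, s1, s2, s3, Sum.inl.injEq, eq_comm]
lemma filt_c23_inl (i : σ) :
    Finset.univ.filter (fun v => c23 σ v = Sum.inl i) = {s1 σ i} := by
  ext v
  rcases v with (a | a) | a <;>
    simp [c23, s1, s2, s3, Sum.inl.injEq, eq_comm]
lemma filt_c23_inr (j : σ) :
    Finset.univ.filter (fun v => c23 σ v = Sum.inr j) = {s2 σ j, s3 σ j} := by
  ext v
  rw [Finset.mem_filter]
  rcases v with (a | a) | a <;>
    simp [c23, s1, s2, s3, Sum.inl.injEq, eq_comm]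

lemma s1_ne_s2 (i : σ) : s1 σ i ≠ s2 σ i := by simp [s1, s2]
lemma s2_ne_s3 (j : σ) : s2 σ j ≠ s3 σ j := by simp [s2, s3]

/-- slot weights -/
def w1 : (σ ⊕ σ) ⊕ σ → ℕ := Sum.elim (Sum.elim (fun _ => 1) (fun _ => 0)) (fun _ => 0)
def w3 : (σ ⊕ σ) ⊕ σ → ℕ := Sum.elim (fun _ => 0) (fun _ => 1)

end Triple

section TripleOps

variable (π : σ → σ → k)

local notation "R" => Polynomial k

lemma Pop_rename_c12 (z : MvPolynomial ((σ ⊕ σ) ⊕ σ) R) :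
    Pop π Sum.inl Sum.inr (rename (c12 σ) z)
      = rename (c12 σ) ((Pop π (s1 σ) (s3 σ) + Pop π (s2 σ) (s3 σ)) z) := by
  rw [Pop_apply, LinearMap.add_apply, map_add, Pop_apply, Pop_apply]
  rw [map_sum, map_sum, ← Finset.sum_add_distrib]
  apply Finset.sum_congr rfl; intro i _
  rw [map_sum, map_sum, ← Finset.sum_add_distrib]
  apply Finset.sum_congr rfl; intro j _
  rw [map_smul, map_smul, ← smul_add]
  congr 1
  rw [pderiv_rename_collapse (c12 σ) (Sum.inr j) z, filt_c12_inr, Finset.sum_singleton,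
    pderiv_rename_collapse, filt_c12_inl, Finset.sum_pair (s1_ne_s2 σ i)]

lemma Pop_rename_c23 (z : MvPolynomial ((σ ⊕ σ) ⊕ σ) R) :
    Pop π Sum.inl Sum.inr (rename (c23 σ) z)
      = rename (c23 σ) ((Pop π (s1 σ) (s2 σ) + Pop π (s1 σ) (s3 σ)) z) := by
  rw [Pop_apply, LinearMap.add_apply, map_add, Pop_apply, Pop_apply]
  rw [map_sum, map_sum, ← Finset.sum_add_distrib]
  apply Finset.sum_congr rfl; intro i _
  rw [map_sum, map_sum, ← Finset.sum_add_distrib]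
  apply Finset.sum_congr rfl; intro j _
  rw [map_smul, map_smul, ← smul_add]
  congr 1
  rw [pderiv_rename_collapse (c23 σ) (Sum.inr j) z, filt_c23_inr,
    Finset.sum_pair (s2_ne_s3 σ j), map_add,
    pderiv_rename_collapse, filt_c23_inl, Finset.sum_singleton,
    pderiv_rename_collapse, filt_c23_inl, Finset.sum_singleton]

lemma Pop_pow_rename_c12 (d : ℕ) (z : MvPolynomial ((σ ⊕ σ) ⊕ σ) R) :
    ((Pop π Sum.inl Sum.inr) ^ d) (rename (c12 σ) z)
      = rename (c12 σ) (((Pop π (s1 σ) (s3 σ) + Pop π (s2 σ) (s3 σ)) ^ d) z) := by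
  induction d generalizing z with
  | zero => simp
  | succ d ih =>
    rw [pow_succ', Module.End.mul_apply, ih, Pop_rename_c12, ← Module.End.mul_apply,
      ← pow_succ']

lemma Pop_pow_rename_c23 (d : ℕ) (z : MvPolynomial ((σ ⊕ σ) ⊕ σ) R) :
    ((Pop π Sum.inl Sum.inr) ^ d) (rename (c23 σ) z)
      = rename (c23 σ) (((Pop π (s1 σ) (s2 σ) + Pop π (s1 σ) (s3 σ)) ^ d) z) := by
  induction d generalizing z with
  | zero => simp
  | succ d ih =>
    rw [pow_succ', Module.End.mul_apply, ih, Pop_rename_c23, ← Module.End.mul_apply,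
      ← pow_succ']

lemma pderiv_rename_s3_eq_zero (q : MvPolynomial σ R) (x : σ ⊕ σ) :
    pderiv (Sum.inl x : (σ ⊕ σ) ⊕ σ) (rename (s3 σ) q) = 0 := by
  apply pderiv_eq_zero_of_notMem_vars
  intro hmem
  obtain ⟨y, -, hy⟩ := Finset.mem_image.1 (MvPolynomial.vars_rename _ _ hmem)
  exact Sum.inr_ne_inl hy

lemma pderiv_rename_s1_eq_zero (q : MvPolynomial σ R) (x : σ ⊕ σ) :
    pderiv (e23 σ x) (rename (s1 σ) q) = 0 := by
  apply pderiv_eq_zero_of_notMem_vars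
  intro hmem
  obtain ⟨y, -, hy⟩ := Finset.mem_image.1 (MvPolynomial.vars_rename _ _ hmem)
  rcases x with x | x <;> simp [s1, e23] at hy

lemma Pop_inner_left (p : MvPolynomial (σ ⊕ σ) R) (q : MvPolynomial σ R) :
    Pop π (s1 σ) (s2 σ) (rename Sum.inl p * rename (s3 σ) q)
      = rename Sum.inl (Pop π Sum.inl Sum.inr p) * rename (s3 σ) q := by
  rw [Pop_apply, Pop_apply, map_sum, Finset.sum_mul]
  apply Finset.sum_congr rfl; intro i _
  rw [map_sum, Finset.sum_mul]
  apply Finset.sum_congr rfl; intro j _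
  rw [map_smul, smul_mul_assoc]
  congr 1
  have h2 : pderiv (s2 σ j) (rename Sum.inl p * rename (s3 σ) q)
      = rename Sum.inl (pderiv (Sum.inr j) p) * rename (s3 σ) q := by
    rw [show (s2 σ j : (σ ⊕ σ) ⊕ σ) = Sum.inl (Sum.inr j) from rfl, pderiv_mul,
      pderiv_rename_s3_eq_zero, mul_zero, add_zero, pderiv_rename Sum.inl_injective]
  rw [h2, show (s1 σ i : (σ ⊕ σ) ⊕ σ) = Sum.inl (Sum.inl i) from rfl, pderiv_mul,
    pderiv_rename_s3_eq_zero, mul_zero, add_zero, pderiv_rename Sum.inl_injective]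

lemma Pop_inner_right (p : MvPolynomial (σ ⊕ σ) R) (q : MvPolynomial σ R) :
    Pop π (s2 σ) (s3 σ) (rename (s1 σ) q * rename (e23 σ) p)
      = rename (s1 σ) q * rename (e23 σ) (Pop π Sum.inl Sum.inr p) := by
  rw [Pop_apply, Pop_apply, map_sum, Finset.mul_sum]
  apply Finset.sum_congr rfl; intro i _
  rw [map_sum, Finset.mul_sum]
  apply Finset.sum_congr rfl; intro j _
  rw [map_smul, mul_smul_comm]
  congr 1
  have h2 : pderiv (s3 σ j) (rename (s1 σ) q * rename (e23 σ) p)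
      = rename (s1 σ) q * rename (e23 σ) (pderiv (Sum.inr j) p) := by
    rw [show (s3 σ j : (σ ⊕ σ) ⊕ σ) = e23 σ (Sum.inr j) from rfl, pderiv_mul,
      pderiv_rename_s1_eq_zero, zero_mul, zero_add, pderiv_rename (e23_inj σ)]
  rw [h2, show (s2 σ i : (σ ⊕ σ) ⊕ σ) = e23 σ (Sum.inl i) from rfl, pderiv_mul,
    pderiv_rename_s1_eq_zero, zero_mul, zero_add, pderiv_rename (e23_inj σ)]

lemma Pop_pow_inner_left (e : ℕ) (p : MvPolynomial (σ ⊕ σ) R) (q : MvPolynomial σ R) :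
    ((Pop π (s1 σ) (s2 σ)) ^ e) (rename Sum.inl p * rename (s3 σ) q)
      = rename Sum.inl (((Pop π Sum.inl Sum.inr) ^ e) p) * rename (s3 σ) q := by
  induction e generalizing p with
  | zero => simp
  | succ e ih =>
    rw [pow_succ', Module.End.mul_apply, ih, Pop_inner_left, ← Module.End.mul_apply,
      ← pow_succ']

lemma Pop_pow_inner_right (e : ℕ) (p : MvPolynomial (σ ⊕ σ) R) (q : MvPolynomial σ R) :
    ((Pop π (s2 σ) (s3 σ)) ^ e) (rename (s1 σ) q * rename (e23 σ) p)
      = rename (s1 σ) q * rename (e23 σ) (((Pop π Sum.inl Sum.inr) ^ e) p) := by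
  induction e generalizing p with
  | zero => simp
  | succ e ih =>
    rw [pow_succ', Module.End.mul_apply, ih, Pop_inner_right, ← Module.End.mul_apply,
      ← pow_succ']

lemma joinMul_eq (p : MvPolynomial (σ ⊕ σ) R) :
    joinMul p = rename (Sum.elim id id) p := by
  have hfun : (Sum.elim X X : σ ⊕ σ → MvPolynomial σ R) = X ∘ Sum.elim id id := by
    funext v; rcases v with v | v <;> rfl
  rw [joinMul, hfun]
  rw [rename_eq_aeval]

lemma tens_joinMul_left (p : MvPolynomial (σ ⊕ σ) R) (q : MvPolynomial σ R) :
    tens (joinMul p) q = rename (c12 σ) (rename Sum.inl p * rename (s3 σ) q) := by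
  rw [tens, joinMul_eq, map_mul, rename_rename, rename_rename, rename_rename]
  have e1 : c12 σ ∘ (Sum.inl : σ ⊕ σ → (σ ⊕ σ) ⊕ σ)
      = (Sum.inl : σ → σ ⊕ σ) ∘ Sum.elim id id := by
    funext v; rcases v with v | v <;> rfl
  have e2 : c12 σ ∘ s3 σ = (Sum.inr : σ → σ ⊕ σ) := by funext v; rfl
  rw [e1, e2]

lemma tens_joinMul_right (p : MvPolynomial (σ ⊕ σ) R) (q : MvPolynomial σ R) :
    tens q (joinMul p) = rename (c23 σ) (rename (s1 σ) q * rename (e23 σ) p) := by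
  rw [tens, joinMul_eq, map_mul, rename_rename, rename_rename, rename_rename]
  have e1 : c23 σ ∘ s1 σ = (Sum.inl : σ → σ ⊕ σ) := by funext v; rfl
  have e2 : c23 σ ∘ e23 σ = (Sum.inr : σ → σ ⊕ σ) ∘ Sum.elim id id := by
    funext v; rcases v with v | v <;> rfl
  rw [e1, e2]

lemma joinMul_rename_c12 (z : MvPolynomial ((σ ⊕ σ) ⊕ σ) R) :
    joinMul (rename (c12 σ) z) = rename (cAll σ) z := by
  rw [joinMul_eq, rename_rename]
  have e1 : Sum.elim (id : σ → σ) id ∘ c12 σ = cAll σ := by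
    funext v; rcases v with (v | v) | v <;> rfl
  rw [e1]

lemma joinMul_rename_c23 (z : MvPolynomial ((σ ⊕ σ) ⊕ σ) R) :
    joinMul (rename (c23 σ) z) = rename (cAll σ) z := by
  rw [joinMul_eq, rename_rename]
  have e1 : Sum.elim (id : σ → σ) id ∘ c23 σ = cAll σ := by
    funext v; rcases v with (v | v) | v <;> rfl
  rw [e1]

lemma rename_inl_tens (f g : MvPolynomial σ R) :
    rename (Sum.inl : σ ⊕ σ → (σ ⊕ σ) ⊕ σ) (tens f g)
      = rename (s1 σ) f * rename (s2 σ) g := by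
  rw [tens, map_mul, rename_rename, rename_rename]
  rfl

lemma rename_e23_tens (g h : MvPolynomial σ R) :
    rename (e23 σ) (tens g h) = rename (s2 σ) g * rename (s3 σ) h := by
  rw [tens, map_mul, rename_rename, rename_rename]
  have e1 : e23 σ ∘ (Sum.inl : σ → σ ⊕ σ) = s2 σ := by funext v; rfl
  have e2 : e23 σ ∘ (Sum.inr : σ → σ ⊕ σ) = s3 σ := by funext v; rfl
  rw [e1, e2]

lemma piOp_eq (q : MvPolynomial (σ ⊕ σ) R) :
    piOp π q = Pop π Sum.inl Sum.inr q := (Pop_apply π Sum.inl Sum.inr q).symm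

lemma piOp_iterate (d : ℕ) (p : MvPolynomial (σ ⊕ σ) R) :
    (piOp π)^[d] p = ((Pop π Sum.inl Sum.inr) ^ d) p := by
  induction d with
  | zero => simp
  | succ d ih =>
    rw [Function.iterate_succ_apply', ih, piOp_eq, ← Module.End.mul_apply, ← pow_succ']

/-- the scalar coefficients of the exponential series -/
def cR (d : ℕ) : Polynomial k :=
  Polynomial.C ((2 ^ d * d.factorial : k)⁻¹) * Polynomial.X ^ d

lemma tens_mem (f g : MvPolynomial σ R) :
    tens f g ∈ Mle (k := k) (fun _ => (1 : ℕ)) (f.totalDegree + g.totalDegree) := by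
  have h1 := rename_mem_Mle (w := fun _ => (1 : ℕ)) (W := 1)
    (Sum.inl_injective (β := σ)) (fun _ => le_rfl) f
  have h2 := rename_mem_Mle (w := fun _ => (1 : ℕ)) (W := 1)
    (Sum.inr_injective (α := σ)) (fun _ => le_rfl) g
  have := mul_mem_Mle h1 h2
  simpa [mul_one, tens] using this

lemma moyal_eq_sum (f g : MvPolynomial σ R) {N : ℕ}
    (hN : f.totalDegree + g.totalDegree + 1 ≤ N) :
    moyal π f g = ∑ d ∈ Finset.range N,
      cR (k := k) d • joinMul (((Pop π Sum.inl Sum.inr) ^ d) (tens f g)) := by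
  rw [moyal]
  rw [Finset.sum_congr rfl (fun d _ => by rw [piOp_iterate π])]
  exact Finset.sum_subset (Finset.range_subset_range.2 hN) (fun d _ hd => by
    rw [Pop_pow_eq_zero π (fun _ _ => by norm_num) (tens_mem f g)
      (by simp only [Finset.mem_range, not_lt] at hd; omega), map_zero, smul_zero])

lemma T_mem_w1 (f g h : MvPolynomial σ R) :
    (rename (s1 σ) f * rename (s2 σ) g * rename (s3 σ) h)
      ∈ Mle (k := k) (w1 σ) f.totalDegree := by
  have h1 := rename_mem_Mle (w := w1 σ) (W := 1) (s1_inj σ) (fun v => by simp [w1, s1]) f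
  have h2 := rename_mem_Mle (w := w1 σ) (W := 0) (s2_inj σ) (fun v => by simp [w1, s2]) g
  have h3 := rename_mem_Mle (w := w1 σ) (W := 0) (s3_inj σ) (fun v => by simp [w1, s3]) h
  have := mul_mem_Mle (mul_mem_Mle h1 h2) h3
  simpa using this

lemma T_mem_w3 (f g h : MvPolynomial σ R) :
    (rename (s1 σ) f * rename (s2 σ) g * rename (s3 σ) h)
      ∈ Mle (k := k) (w3 σ) h.totalDegree := by
  have h1 := rename_mem_Mle (w := w3 σ) (W := 0) (s1_inj σ) (fun v => by simp [w3, s1]) f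
  have h2 := rename_mem_Mle (w := w3 σ) (W := 0) (s2_inj σ) (fun v => by simp [w3, s2]) g
  have h3 := rename_mem_Mle (w := w3 σ) (W := 1) (s3_inj σ) (fun v => by simp [w3, s3]) h
  have := mul_mem_Mle (mul_mem_Mle h1 h2) h3
  simpa using this

lemma tens_sum_left (s : Finset ℕ) (r : ℕ → Polynomial k) (p : ℕ → MvPolynomial σ R)
    (q : MvPolynomial σ R) :
    tens (∑ e ∈ s, r e • p e) q = ∑ e ∈ s, r e • tens (p e) q := by
  rw [tens, map_sum, Finset.sum_mul]
  apply Finset.sum_congr rfl; intro e _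
  rw [map_smul, smul_mul_assoc, tens]

lemma tens_sum_right (s : Finset ℕ) (r : ℕ → Polynomial k) (p : ℕ → MvPolynomial σ R)
    (q : MvPolynomial σ R) :
    tens q (∑ e ∈ s, r e • p e) = ∑ e ∈ s, r e • tens q (p e) := by
  rw [tens, map_sum, Finset.mul_sum]
  apply Finset.sum_congr rfl; intro e _
  rw [map_smul, mul_smul_comm, tens]

lemma moyal_left_expand (f g h : MvPolynomial σ R) {N : ℕ}
    (h1 : (moyal π f g).totalDegree + h.totalDegree + 1 ≤ N)
    (h2 : f.totalDegree + g.totalDegree + 1 ≤ N) :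
    moyal π (moyal π f g) h
      = ∑ d ∈ Finset.range N, ∑ e ∈ Finset.range N,
          (cR (k := k) d * cR e) • rename (cAll σ)
            (((Pop π (s1 σ) (s3 σ) + Pop π (s2 σ) (s3 σ)) ^ d)
              (((Pop π (s1 σ) (s2 σ)) ^ e)
                (rename (s1 σ) f * rename (s2 σ) g * rename (s3 σ) h))) := by
  rw [moyal_eq_sum π _ _ h1]
  apply Finset.sum_congr rfl; intro d _
  rw [moyal_eq_sum π f g h2, tens_sum_left, map_sum, map_sum, Finset.smul_sum]
  apply Finset.sum_congr rfl; intro e _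
  rw [map_smul, map_smul, smul_smul]
  congr 1
  have key : rename (Sum.inl : σ ⊕ σ → (σ ⊕ σ) ⊕ σ) (((Pop π Sum.inl Sum.inr) ^ e) (tens f g))
      * rename (s3 σ) h
      = ((Pop π (s1 σ) (s2 σ)) ^ e)
          (rename (s1 σ) f * rename (s2 σ) g * rename (s3 σ) h) := by
    rw [← rename_inl_tens, ← Pop_pow_inner_left]
  rw [tens_joinMul_left, Pop_pow_rename_c12, joinMul_rename_c12, key]

lemma moyal_right_expand (f g h : MvPolynomial σ R) {N : ℕ}
    (h1 : f.totalDegree + (moyal π g h).totalDegree + 1 ≤ N)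
    (h2 : g.totalDegree + h.totalDegree + 1 ≤ N) :
    moyal π f (moyal π g h)
      = ∑ d ∈ Finset.range N, ∑ e ∈ Finset.range N,
          (cR (k := k) d * cR e) • rename (cAll σ)
            (((Pop π (s1 σ) (s2 σ) + Pop π (s1 σ) (s3 σ)) ^ d)
              (((Pop π (s2 σ) (s3 σ)) ^ e)
                (rename (s1 σ) f * rename (s2 σ) g * rename (s3 σ) h))) := by
  rw [moyal_eq_sum π _ _ h1]
  apply Finset.sum_congr rfl; intro d _
  rw [moyal_eq_sum π g h h2, tens_sum_right, map_sum, map_sum, Finset.smul_sum]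
  apply Finset.sum_congr rfl; intro e _
  rw [map_smul, map_smul, smul_smul]
  congr 1
  have key : rename (s1 σ) f
      * rename (e23 σ) (((Pop π Sum.inl Sum.inr) ^ e) (tens g h))
      = ((Pop π (s2 σ) (s3 σ)) ^ e)
          (rename (s1 σ) f * rename (s2 σ) g * rename (s3 σ) h) := by
    rw [← Pop_pow_inner_right, rename_e23_tens, mul_assoc]
  rw [tens_joinMul_right, Pop_pow_rename_c23, joinMul_rename_c23, key]

/-- symmetric coefficient -/
def w3co (a b c : ℕ) : Polynomial k :=
  Polynomial.C (((2 : k) ^ (a + b + c))⁻¹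
      * ((a.factorial : k)⁻¹ * ((b.factorial : k)⁻¹ * (c.factorial : k)⁻¹)))
    * Polynomial.X ^ (a + b + c)

lemma cR_eq (d : ℕ) :
    cR (k := k) d = Polynomial.C (((2 : k) ^ d)⁻¹ * (d.factorial : k)⁻¹)
      * Polynomial.X ^ d := by
  rw [cR, mul_inv]

lemma coeff_key_left {d e j : ℕ} (hj : j ≤ d) :
    ((2 : k) ^ d)⁻¹ * (d.factorial : k)⁻¹ * (((2 : k) ^ e)⁻¹ * (e.factorial : k)⁻¹)
        * (d.choose j : k)
      = ((2 : k) ^ (e + j + (d - j)))⁻¹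
          * ((e.factorial : k)⁻¹ * ((j.factorial : k)⁻¹ * (((d - j).factorial : k)⁻¹))) := by
  have h2 : (2 : k) ≠ 0 := two_ne_zero
  have hd : (d.factorial : k) ≠ 0 := Nat.cast_ne_zero.2 (Nat.factorial_ne_zero d)
  have he : (e.factorial : k) ≠ 0 := Nat.cast_ne_zero.2 (Nat.factorial_ne_zero e)
  have hjj : (j.factorial : k) ≠ 0 := Nat.cast_ne_zero.2 (Nat.factorial_ne_zero j)
  have hdj : ((d - j).factorial : k) ≠ 0 := Nat.cast_ne_zero.2 (Nat.factorial_ne_zero (d - j))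
  have hch : (j.factorial : k) * ((d - j).factorial : k) * (d.choose j : k)
      = (d.factorial : k) := by
    have := Nat.choose_mul_factorial_mul_factorial hj
    exact_mod_cast congrArg (fun n : ℕ => (n : k)) (by rw [← this]; ring)
  have hc0 : (d.choose j : k) ≠ 0 := Nat.cast_ne_zero.2 (Nat.choose_pos hj).ne'
  have key2 : (d.factorial : k)⁻¹ * (d.choose j : k)
      = (j.factorial : k)⁻¹ * (((d - j).factorial : k)⁻¹) := by
    rw [← hch, mul_inv, mul_assoc, inv_mul_cancel₀ hc0, mul_one, mul_inv]
  have hexp : e + j + (d - j) = e + d := by omega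
  rw [hexp, pow_add, mul_inv]
  linear_combination (((2 : k) ^ e)⁻¹ * ((2 : k) ^ d)⁻¹ * (e.factorial : k)⁻¹) * key2

lemma coeff_key_right {d e j : ℕ} (hj : j ≤ d) :
    ((2 : k) ^ d)⁻¹ * (d.factorial : k)⁻¹ * (((2 : k) ^ e)⁻¹ * (e.factorial : k)⁻¹)
        * (d.choose j : k)
      = ((2 : k) ^ (j + (d - j) + e))⁻¹
          * ((j.factorial : k)⁻¹ * (((d - j).factorial : k)⁻¹ * (e.factorial : k)⁻¹)) := by
  rw [coeff_key_left hj]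
  have hexp : e + j + (d - j) = j + (d - j) + e := by omega
  rw [hexp]
  ring

lemma coeff_left {d e j : ℕ} (hj : j ≤ d) :
    (d.choose j : Polynomial k) * (cR d * cR e) = w3co e j (d - j) := by
  rw [cR_eq, cR_eq, w3co]
  have hco : ((2 : k) ^ (e + j + (d - j)))⁻¹
      * ((e.factorial : k)⁻¹ * ((j.factorial : k)⁻¹ * (((d - j).factorial : k)⁻¹)))
      = (((2 : k) ^ d)⁻¹ * (d.factorial : k)⁻¹) * ((((2 : k) ^ e)⁻¹ * (e.factorial : k)⁻¹))
        * (d.choose j : k) := (coeff_key_left hj).symm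
  have hexp : e + j + (d - j) = d + e := by omega
  rw [hco, hexp, pow_add]
  simp only [map_mul, Polynomial.C_eq_natCast]
  ring

lemma coeff_right {d e j : ℕ} (hj : j ≤ d) :
    (d.choose j : Polynomial k) * (cR d * cR e) = w3co j (d - j) e := by
  rw [cR_eq, cR_eq, w3co]
  have hco : ((2 : k) ^ (j + (d - j) + e))⁻¹
      * ((j.factorial : k)⁻¹ * (((d - j).factorial : k)⁻¹ * ((e.factorial : k)⁻¹)))
      = (((2 : k) ^ d)⁻¹ * (d.factorial : k)⁻¹) * ((((2 : k) ^ e)⁻¹ * (e.factorial : k)⁻¹))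
        * (d.choose j : k) := (coeff_key_right hj).symm
  have hexp : j + (d - j) + e = d + e := by omega
  rw [hco, hexp, pow_add]
  simp only [map_mul, Polynomial.C_eq_natCast]
  ring

lemma expand_left_term (f g h : MvPolynomial σ R) (d e : ℕ) :
    (cR (k := k) d * cR e) • rename (cAll σ)
        (((Pop π (s1 σ) (s3 σ) + Pop π (s2 σ) (s3 σ)) ^ d)
          (((Pop π (s1 σ) (s2 σ)) ^ e)
            (rename (s1 σ) f * rename (s2 σ) g * rename (s3 σ) h)))
      = ∑ j ∈ Finset.range (d + 1),
          w3co (k := k) e j (d - j) • rename (cAll σ)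
            ((Pop π (s1 σ) (s2 σ) ^ e
              * (Pop π (s1 σ) (s3 σ) ^ j * Pop π (s2 σ) (s3 σ) ^ (d - j)))
              (rename (s1 σ) f * rename (s2 σ) g * rename (s3 σ) h)) := by
  set A := Pop π (s1 σ) (s2 σ) with hA
  set B := Pop π (s1 σ) (s3 σ) with hB
  set Cc := Pop π (s2 σ) (s3 σ) with hCc
  set T := rename (s1 σ) f * rename (s2 σ) g * rename (s3 σ) h with hT
  have hBC : Commute B Cc := Pop_comm π π _ _ _ _
  have hAB : Commute A B := Pop_comm π π _ _ _ _
  have hAC : Commute A Cc := Pop_comm π π _ _ _ _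
  rw [hBC.add_pow, LinearMap.sum_apply, map_sum, Finset.smul_sum]
  apply Finset.sum_congr rfl
  intro j hj
  rw [Finset.mem_range] at hj
  have hj' : j ≤ d := by omega
  have hcomm : A ^ e * (B ^ j * Cc ^ (d - j)) = B ^ j * Cc ^ (d - j) * A ^ e :=
    ((hAB.pow_pow e j).mul_right (hAC.pow_pow e (d - j))).eq
  rw [Module.End.mul_apply, Module.End.natCast_apply, map_nsmul, ← Module.End.mul_apply,
    ← hcomm, map_nsmul, ← Nat.cast_smul_eq_nsmul (Polynomial k), smul_smul,
    show (cR (k := k) d * cR e) * (d.choose j : Polynomial k) = w3co e j (d - j) from by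
      rw [mul_comm]; exact coeff_left hj']

lemma expand_right_term (f g h : MvPolynomial σ R) (d e : ℕ) :
    (cR (k := k) d * cR e) • rename (cAll σ)
        (((Pop π (s1 σ) (s2 σ) + Pop π (s1 σ) (s3 σ)) ^ d)
          (((Pop π (s2 σ) (s3 σ)) ^ e)
            (rename (s1 σ) f * rename (s2 σ) g * rename (s3 σ) h)))
      = ∑ j ∈ Finset.range (d + 1),
          w3co (k := k) j (d - j) e • rename (cAll σ)
            ((Pop π (s1 σ) (s2 σ) ^ j
              * (Pop π (s1 σ) (s3 σ) ^ (d - j) * Pop π (s2 σ) (s3 σ) ^ e))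
              (rename (s1 σ) f * rename (s2 σ) g * rename (s3 σ) h)) := by
  set A := Pop π (s1 σ) (s2 σ) with hA
  set B := Pop π (s1 σ) (s3 σ) with hB
  set Cc := Pop π (s2 σ) (s3 σ) with hCc
  set T := rename (s1 σ) f * rename (s2 σ) g * rename (s3 σ) h with hT
  have hAB : Commute A B := Pop_comm π π _ _ _ _
  rw [hAB.add_pow, LinearMap.sum_apply, map_sum, Finset.smul_sum]
  apply Finset.sum_congr rfl
  intro j hj
  rw [Finset.mem_range] at hj
  have hj' : j ≤ d := by omega
  rw [Module.End.mul_apply, Module.End.natCast_apply, map_nsmul, ← Module.End.mul_apply,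
    mul_assoc, map_nsmul, ← Nat.cast_smul_eq_nsmul (Polynomial k), smul_smul,
    show (cR (k := k) d * cR e) * (d.choose j : Polynomial k) = w3co j (d - j) e from by
      rw [mul_comm]; exact coeff_right hj']

lemma hab_w1_A : ∀ i j : σ, 1 ≤ w1 σ (s1 σ i) + w1 σ (s2 σ j) := by
  intro i j; simp [w1, s1, s2]
lemma hab_w1_B : ∀ i j : σ, 1 ≤ w1 σ (s1 σ i) + w1 σ (s3 σ j) := by
  intro i j; simp [w1, s1, s3]
lemma hab_w3_B : ∀ i j : σ, 1 ≤ w3 σ (s1 σ i) + w3 σ (s3 σ j) := by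
  intro i j; simp [w3, s1, s3]
lemma hab_w3_C : ∀ i j : σ, 1 ≤ w3 σ (s2 σ i) + w3 σ (s3 σ j) := by
  intro i j; simp [w3, s2, s3]

lemma vanish_left (f g h : MvPolynomial σ R) (e j m : ℕ) (hjm : h.totalDegree < j + m) :
    ((Pop π (s1 σ) (s2 σ) ^ e
        * (Pop π (s1 σ) (s3 σ) ^ j * Pop π (s2 σ) (s3 σ) ^ m)))
      (rename (s1 σ) f * rename (s2 σ) g * rename (s3 σ) h) = 0 := by
  rw [Module.End.mul_apply, Module.End.mul_apply]
  by_cases hm : h.totalDegree < m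
  · rw [Pop_pow_eq_zero π hab_w3_C (T_mem_w3 f g h) hm, map_zero, map_zero]
  · have h1 := Pop_pow_mem_Mle_sub π hab_w3_C (T_mem_w3 f g h) m
    rw [Pop_pow_eq_zero π hab_w3_B h1 (by omega), map_zero]

lemma vanish_right (f g h : MvPolynomial σ R) (e j m : ℕ) (hjm : f.totalDegree < j + m) :
    ((Pop π (s1 σ) (s2 σ) ^ j
        * (Pop π (s1 σ) (s3 σ) ^ m * Pop π (s2 σ) (s3 σ) ^ e)))
      (rename (s1 σ) f * rename (s2 σ) g * rename (s3 σ) h) = 0 := by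
  rw [Module.End.mul_apply, Module.End.mul_apply]
  have h0 := Pop_pow_mem_Mle π (s2 σ) (s3 σ) (T_mem_w1 f g h) e
  by_cases hm : f.totalDegree < m
  · rw [Pop_pow_eq_zero π hab_w1_B h0 hm, map_zero]
  · have h1 := Pop_pow_mem_Mle_sub π hab_w1_B h0 m
    rw [Pop_pow_eq_zero π hab_w1_A h1 (by omega)]

lemma core (f g h : MvPolynomial σ R) {N : ℕ}
    (hfN : f.totalDegree < N) (hhN : h.totalDegree < N) :
    ∑ d ∈ Finset.range N, ∑ e ∈ Finset.range N,
        (cR (k := k) d * cR e) • rename (cAll σ)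
          (((Pop π (s1 σ) (s3 σ) + Pop π (s2 σ) (s3 σ)) ^ d)
            (((Pop π (s1 σ) (s2 σ)) ^ e)
              (rename (s1 σ) f * rename (s2 σ) g * rename (s3 σ) h)))
      = ∑ d ∈ Finset.range N, ∑ e ∈ Finset.range N,
          (cR (k := k) d * cR e) • rename (cAll σ)
            (((Pop π (s1 σ) (s2 σ) + Pop π (s1 σ) (s3 σ)) ^ d)
              (((Pop π (s2 σ) (s3 σ)) ^ e)
                (rename (s1 σ) f * rename (s2 σ) g * rename (s3 σ) h))) := by
  have L : ∑ d ∈ Finset.range N, ∑ e ∈ Finset.range N,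
        (cR (k := k) d * cR e) • rename (cAll σ)
          (((Pop π (s1 σ) (s3 σ) + Pop π (s2 σ) (s3 σ)) ^ d)
            (((Pop π (s1 σ) (s2 σ)) ^ e)
              (rename (s1 σ) f * rename (s2 σ) g * rename (s3 σ) h)))
      = ∑ e ∈ Finset.range N, ∑ a ∈ Finset.range N, ∑ b ∈ Finset.range N,
          w3co (k := k) e a b • rename (cAll σ)
            ((Pop π (s1 σ) (s2 σ) ^ e
              * (Pop π (s1 σ) (s3 σ) ^ a * Pop π (s2 σ) (s3 σ) ^ b))
              (rename (s1 σ) f * rename (s2 σ) g * rename (s3 σ) h)) := by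
    rw [Finset.sum_comm]
    apply Finset.sum_congr rfl
    intro e _
    rw [Finset.sum_congr rfl (fun d _ => expand_left_term π f g h d e)]
    exact (tri_sum N (fun p => w3co (k := k) e p.1 p.2 • rename (cAll σ)
      ((Pop π (s1 σ) (s2 σ) ^ e
        * (Pop π (s1 σ) (s3 σ) ^ p.1 * Pop π (s2 σ) (s3 σ) ^ p.2))
        (rename (s1 σ) f * rename (s2 σ) g * rename (s3 σ) h)))
      (fun j m _ _ hge => by
        simp only [vanish_left π f g h e j m (by omega), map_zero, smul_zero])).trans
      (Finset.sum_product _ _ _)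
  have Rr : ∑ d ∈ Finset.range N, ∑ e ∈ Finset.range N,
        (cR (k := k) d * cR e) • rename (cAll σ)
          (((Pop π (s1 σ) (s2 σ) + Pop π (s1 σ) (s3 σ)) ^ d)
            (((Pop π (s2 σ) (s3 σ)) ^ e)
              (rename (s1 σ) f * rename (s2 σ) g * rename (s3 σ) h)))
      = ∑ e ∈ Finset.range N, ∑ a ∈ Finset.range N, ∑ b ∈ Finset.range N,
          w3co (k := k) a b e • rename (cAll σ)
            ((Pop π (s1 σ) (s2 σ) ^ a
              * (Pop π (s1 σ) (s3 σ) ^ b * Pop π (s2 σ) (s3 σ) ^ e))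
              (rename (s1 σ) f * rename (s2 σ) g * rename (s3 σ) h)) := by
    rw [Finset.sum_comm]
    apply Finset.sum_congr rfl
    intro e _
    rw [Finset.sum_congr rfl (fun d _ => expand_right_term π f g h d e)]
    exact (tri_sum N (fun p => w3co (k := k) p.1 p.2 e • rename (cAll σ)
      ((Pop π (s1 σ) (s2 σ) ^ p.1
        * (Pop π (s1 σ) (s3 σ) ^ p.2 * Pop π (s2 σ) (s3 σ) ^ e))
        (rename (s1 σ) f * rename (s2 σ) g * rename (s3 σ) h)))
      (fun j m _ _ hge => by
        simp only [vanish_right π f g h e j m (by omega), map_zero, smul_zero])).trans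
      (Finset.sum_product _ _ _)
  rw [L, Rr]
  conv_rhs => rw [Finset.sum_comm]
  apply Finset.sum_congr rfl
  intro i _
  conv_rhs => rw [Finset.sum_comm]

end TripleOps

end MoyalAux

/-- the Moyal star product is associative. -/
theorem moyal_assoc (π : σ → σ → k) (hπ : ∀ i j, π j i = -π i j)
    (f g h : MvPolynomial σ (Polynomial k)) :
    moyal π (moyal π f g) h = moyal π f (moyal π g h) := by
  set N := (moyal π f g).totalDegree + (moyal π g h).totalDegree + f.totalDegree
    + g.totalDegree + h.totalDegree + 1 with hN
  rw [MoyalAux.moyal_left_expand π f g h (N := N) (by omega) (by omega),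
    MoyalAux.moyal_right_expand π f g h (N := N) (by omega) (by omega)]
  exact MoyalAux.core π f g h (by omega) (by omega)
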